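/- arXiv:1809.09007 — 3 statements merged into one kernel-verified Lean document; each statement's English description precedes it below -/
import Mathlib

section
/- The real quadratic form q(v₁, v₂, v₃) = Σⱼ Γⱼ |vⱼ|² on the complex subspace {(v₁,v₂,v₃) ∈ ℂ³ : Γ₁v₁ + Γ₂v₂ + Γ₃v₃ = 0} is (positive or negative) definite if and only if Γ₁Γ₂Γ₃(Γ₁ + Γ₂ + Γ₃) > 0. -/
open Complex

private lemma posdef_two (A B C : ℝ) (hA : 0 < A) (hD : 0 < A * C - B ^ 2) :
    ∀ a b : ℂ, ¬(a = 0 ∧ b = 0) →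
      0 < A * normSq a + 2 * B * (a * (starRingEnd ℂ) b).re + C * normSq b := by
  intro a b hab
  have h0a : 0 ≤ normSq a := normSq_nonneg a
  have h0b : 0 ≤ normSq b := normSq_nonneg b
  have hC : 0 < C := by nlinarith [sq_nonneg B]
  have ht : (a * (starRingEnd ℂ) b).re ^ 2 ≤ normSq a * normSq b := by
    have h1 : (a * (starRingEnd ℂ) b).re ^ 2 ≤ normSq (a * (starRingEnd ℂ) b) := by
      rw [normSq_apply]; nlinarith [sq_nonneg (a * (starRingEnd ℂ) b).im]
    calc (a * (starRingEnd ℂ) b).re ^ 2 ≤ normSq (a * (starRingEnd ℂ) b) := h1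
      _ = normSq a * normSq b := by rw [normSq_mul, normSq_conj]
  rcases eq_or_lt_of_le h0a with h | h
  · have ha : a = 0 := normSq_eq_zero.mp h.symm
    have hb : b ≠ 0 := fun hb => hab ⟨ha, hb⟩
    have hnb : 0 < normSq b := normSq_pos.mpr hb
    simp only [ha, normSq_zero, mul_zero, zero_mul, zero_re, add_zero, zero_add]
    positivity
  · rcases eq_or_lt_of_le h0b with h' | h'
    · have hb : b = 0 := normSq_eq_zero.mp h'.symm
      simp only [hb, normSq_zero, mul_zero, zero_re, add_zero, map_zero]
      positivity
    · nlinarith [sq_nonneg (A * normSq a + B * (a * (starRingEnd ℂ) b).re),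
        mul_pos hA h, mul_pos (mul_pos hD h) h',
        mul_nonneg (sq_nonneg B) (sub_nonneg.mpr ht)]

private lemma D_of_posdef (A B C : ℝ)
    (h : ∀ a b : ℂ, ¬(a = 0 ∧ b = 0) →
      0 < A * normSq a + 2 * B * (a * (starRingEnd ℂ) b).re + C * normSq b) :
    0 < A * C - B ^ 2 := by
  have hA : 0 < A := by
    have := h 1 0 (by simp)
    simpa using this
  have hne : ¬((B : ℂ) = 0 ∧ (↑(-A) : ℂ) = 0) := by
    rintro ⟨-, h2⟩
    rw [Complex.ofReal_eq_zero] at h2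
    exact hA.ne' (by linarith)
  have key := h (B : ℂ) (↑(-A) : ℂ) hne
  rw [conj_ofReal, ← ofReal_mul, ofReal_re, normSq_ofReal, normSq_ofReal] at key
  nlinarith [key, hA]

private lemma two_iff (A B C : ℝ) :
    ((∀ a b : ℂ, ¬(a = 0 ∧ b = 0) →
        0 < A * normSq a + 2 * B * (a * (starRingEnd ℂ) b).re + C * normSq b) ∨
     (∀ a b : ℂ, ¬(a = 0 ∧ b = 0) →
        A * normSq a + 2 * B * (a * (starRingEnd ℂ) b).re + C * normSq b < 0)) ↔
    0 < A * C - B ^ 2 := by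
  constructor
  · rintro (h | h)
    · exact D_of_posdef A B C h
    · have h' : ∀ a b : ℂ, ¬(a = 0 ∧ b = 0) →
          0 < (-A) * normSq a + 2 * (-B) * (a * (starRingEnd ℂ) b).re + (-C) * normSq b := by
        intro a b hab
        have := h a b hab
        linarith
      have := D_of_posdef (-A) (-B) (-C) h'
      nlinarith [this]
  · intro hD
    rcases lt_trichotomy A 0 with hA | hA | hA
    · right
      intro a b hab
      have := posdef_two (-A) (-B) (-C) (by linarith) (by nlinarith) a b hab
      linarith
    · exfalso; rw [hA] at hD; nlinarith [sq_nonneg B]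
    · left; exact posdef_two A B C hA hD

/-- The real quadratic form `q(v) = Σⱼ Γⱼ |vⱼ|²` on the complex subspace
`{v ∈ ℂ³ : Γ₁v₁ + Γ₂v₂ + Γ₃v₃ = 0}` is (positive or negative) definite
if and only if `Γ₁Γ₂Γ₃(Γ₁+Γ₂+Γ₃) > 0`. -/
theorem definiteness_on_slice (Γ : Fin 3 → ℝ) (hΓ : ∀ j, Γ j ≠ 0) :
    ((∀ v : Fin 3 → ℂ, (∑ j, (Γ j : ℂ) * v j) = 0 → v ≠ 0 →
        0 < ∑ j, Γ j * Complex.normSq (v j)) ∨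
     (∀ v : Fin 3 → ℂ, (∑ j, (Γ j : ℂ) * v j) = 0 → v ≠ 0 →
        ∑ j, Γ j * Complex.normSq (v j) < 0)) ↔
    0 < Γ 0 * Γ 1 * Γ 2 * (Γ 0 + Γ 1 + Γ 2) := by
  have key : ∀ v : Fin 3 → ℂ, (∑ j, (Γ j : ℂ) * v j) = 0 →
      Γ 2 * (∑ j, Γ j * Complex.normSq (v j)) =
        (Γ 0 * (Γ 0 + Γ 2)) * normSq (v 0) +
          2 * (Γ 0 * Γ 1) * ((v 0) * (starRingEnd ℂ) (v 1)).re +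
          (Γ 1 * (Γ 1 + Γ 2)) * normSq (v 1) := by
    intro v hv
    rw [Fin.sum_univ_three] at hv
    have hre := congrArg Complex.re hv
    have him := congrArg Complex.im hv
    simp only [Complex.add_re, Complex.add_im, Complex.mul_re, Complex.mul_im,
      Complex.ofReal_re, Complex.ofReal_im, Complex.zero_re, Complex.zero_im,
      zero_mul, mul_zero, sub_zero, zero_add, add_zero] at hre him
    rw [Fin.sum_univ_three]
    simp only [normSq_apply, Complex.mul_re, Complex.conj_re, Complex.conj_im]
    linear_combination (Γ 2 * (v 2).re - Γ 0 * (v 0).re - Γ 1 * (v 1).re) * hre +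
      (Γ 2 * (v 2).im - Γ 0 * (v 0).im - Γ 1 * (v 1).im) * him
  have mem_aux : ∀ v : Fin 3 → ℂ, (∑ j, (Γ j : ℂ) * v j) = 0 → v ≠ 0 →
      ¬(v 0 = 0 ∧ v 1 = 0) := by
    rintro v hv hvne ⟨h0, h1⟩
    apply hvne
    rw [Fin.sum_univ_three, h0, h1] at hv
    simp only [mul_zero, zero_add, add_zero, mul_eq_zero, Complex.ofReal_eq_zero] at hv
    have h2 : v 2 = 0 := hv.resolve_left (hΓ 2)
    funext j
    fin_cases j <;> simpa
  have exists_v : ∀ a b : ℂ, ∃ v : Fin 3 → ℂ,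
      (∑ j, (Γ j : ℂ) * v j) = 0 ∧ v 0 = a ∧ v 1 = b := by
    intro a b
    have hΓ2 : (Γ 2 : ℂ) ≠ 0 := Complex.ofReal_ne_zero.mpr (hΓ 2)
    refine ⟨![a, b, -(((Γ 0 : ℂ) * a + (Γ 1 : ℂ) * b) / (Γ 2 : ℂ))], ?_, rfl, rfl⟩
    rw [Fin.sum_univ_three]
    simp only [Matrix.cons_val_zero, Matrix.cons_val_one, Matrix.head_cons,
      Matrix.cons_val_two, Matrix.tail_cons]
    field_simp
    ring
  have hiff := two_iff (Γ 0 * (Γ 0 + Γ 2)) (Γ 0 * Γ 1) (Γ 1 * (Γ 1 + Γ 2))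
  have hDeq : (Γ 0 * (Γ 0 + Γ 2)) * (Γ 1 * (Γ 1 + Γ 2)) - (Γ 0 * Γ 1) ^ 2 =
      Γ 0 * Γ 1 * Γ 2 * (Γ 0 + Γ 1 + Γ 2) := by ring
  rw [hDeq] at hiff
  rw [← hiff]
  rcases (hΓ 2).lt_or_gt with h2 | h2
  · constructor
    · rintro (hq | hq)
      · right
        intro a b hab
        obtain ⟨v, hv, h0, h1⟩ := exists_v a b
        have hvne : v ≠ 0 := by
          intro hz
          exact hab ⟨by rw [← h0, hz]; rfl, by rw [← h1, hz]; rfl⟩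
        have hk := key v hv
        rw [h0, h1] at hk
        rw [← hk]
        exact mul_neg_of_neg_of_pos h2 (hq v hv hvne)
      · left
        intro a b hab
        obtain ⟨v, hv, h0, h1⟩ := exists_v a b
        have hvne : v ≠ 0 := by
          intro hz
          exact hab ⟨by rw [← h0, hz]; rfl, by rw [← h1, hz]; rfl⟩
        have hk := key v hv
        rw [h0, h1] at hk
        rw [← hk]
        exact mul_pos_of_neg_of_neg h2 (hq v hv hvne)
    · rintro (hf | hf)
      · right
        intro v hv hvne
        have hF := hf (v 0) (v 1) (mem_aux v hv hvne)
        have hk := key v hv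
        nlinarith [hF, hk]
      · left
        intro v hv hvne
        have hF := hf (v 0) (v 1) (mem_aux v hv hvne)
        have hk := key v hv
        nlinarith [hF, hk]
  · constructor
    · rintro (hq | hq)
      · left
        intro a b hab
        obtain ⟨v, hv, h0, h1⟩ := exists_v a b
        have hvne : v ≠ 0 := by
          intro hz
          exact hab ⟨by rw [← h0, hz]; rfl, by rw [← h1, hz]; rfl⟩
        have hk := key v hv
        rw [h0, h1] at hk
        rw [← hk]
        exact mul_pos h2 (hq v hv hvne)
      · right
        intro a b hab
        obtain ⟨v, hv, h0, h1⟩ := exists_v a b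
        have hvne : v ≠ 0 := by
          intro hz
          exact hab ⟨by rw [← h0, hz]; rfl, by rw [← h1, hz]; rfl⟩
        have hk := key v hv
        rw [h0, h1] at hk
        rw [← hk]
        exact mul_neg_of_pos_of_neg h2 (hq v hv hvne)
    · rintro (hf | hf)
      · left
        intro v hv hvne
        have hF := hf (v 0) (v 1) (mem_aux v hv hvne)
        have hk := key v hv
        nlinarith [hF, hk]
      · right
        intro v hv hvne
        have hF := hf (v 0) (v 1) (mem_aux v hv hvne)
        have hk := key v hv
        nlinarith [hF, hk]
end

section
/- Let A, B, C > 0 and J(w,u,v) = (A|v|² + B|w|², A|v|² + C|u|²) on ℂ³ ≅ ℝ⁶. For t > 0, the fibre F = J⁻¹(t,t) is a 4-dimensional real algebraic variety whose singular locus is exactly the circle {(0, 0, v) : A|v|² = t}. -/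
open Complex
open scoped InnerProductSpace

theorem not_linearIndependent_pair_iff_eq {K V : Type*} [Field K] [AddCommGroup V] [Module K V]
    {x y : V} (φ : V →ₗ[K] K) (hφ : φ x = φ y) (hx : φ x ≠ 0) :
    ¬LinearIndependent K ![x, y] ↔ x = y := by
  have hx₀ : x ≠ 0 := fun h => hx (by simp [h])
  simp only [LinearIndependent.pair_iff' hx₀, not_forall, not_not]
  constructor
  · rintro ⟨a, rfl⟩
    have ha : a = 1 := by simpa [hx] using hφ.symm
    rw [ha, one_smul]
  · intro h
    exact ⟨1, by rw [one_smul, h]⟩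

theorem fderiv_mul_normSq_add_mul_normSq_apply {E : Type*} [NormedAddCommGroup E]
    [NormedSpace ℝ E] (a b : ℝ) {f g : E → ℂ} {f' g' : E →L[ℝ] ℂ} {x : E}
    (hf : HasFDerivAt f f' x) (hg : HasFDerivAt g g' x) (h : E) :
    fderiv ℝ (fun y => a * normSq (f y) + b * normSq (g y)) x h =
      2 * (a * ⟪f x, f' h⟫_ℝ + b * ⟪g x, g' h⟫_ℝ) := by
  simp only [normSq_eq_norm_sq]
  rw [((hf.norm_sq.const_mul a).fun_add (hg.norm_sq.const_mul b)).fderiv]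
  simp only [add_apply, smul_apply, ContinuousLinearMap.comp_apply, coe_innerSL_apply,
    smul_eq_mul, nsmul_eq_mul, Nat.cast_ofNat]
  ring

theorem forall_mul_inner_eq_mul_inner_iff {F : Type*} [NormedAddCommGroup F]
    [InnerProductSpace ℝ F] {b c : ℝ} (hb : b ≠ 0) (hc : c ≠ 0) {w u : F} :
    (∀ x y : F, b * ⟪w, x⟫_ℝ = c * ⟪u, y⟫_ℝ) ↔ w = 0 ∧ u = 0 := by
  refine ⟨fun h => ⟨?_, ?_⟩, ?_⟩
  · simpa [hb] using h w 0
  · simpa [hc] using (h 0 u).symm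
  · rintro ⟨rfl, rfl⟩ x y
    simp only [inner_zero_left, mul_zero]

theorem singular_locus_of_critical_fibre_general
    (A B C : ℝ) (hB : 0 < B) (hC : 0 < C) (t : ℝ) (ht : 0 < t) :
    ∀ p : ℂ × ℂ × ℂ,
      (A * Complex.normSq p.2.2 + B * Complex.normSq p.1 = t ∧
       A * Complex.normSq p.2.2 + C * Complex.normSq p.2.1 = t) →
      (¬ LinearIndependent ℝ
          ![fderiv ℝ (fun q : ℂ × ℂ × ℂ =>
              A * Complex.normSq q.2.2 + B * Complex.normSq q.1) p,
            fderiv ℝ (fun q : ℂ × ℂ × ℂ =>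
              A * Complex.normSq q.2.2 + C * Complex.normSq q.2.1) p] ↔
        (p.1 = 0 ∧ p.2.1 = 0 ∧ A * Complex.normSq p.2.2 = t)) := by
  rintro p ⟨hp₁, hp₂⟩
  set ℓ₁ := fderiv ℝ (fun q : ℂ × ℂ × ℂ => A * normSq q.2.2 + B * normSq q.1) p
  set ℓ₂ := fderiv ℝ (fun q : ℂ × ℂ × ℂ => A * normSq q.2.2 + C * normSq q.2.1) p
  have hℓ₁ (h : ℂ × ℂ × ℂ) : ℓ₁ h = 2 * (A * ⟪p.2.2, h.2.2⟫_ℝ + B * ⟪p.1, h.1⟫_ℝ) :=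
    fderiv_mul_normSq_add_mul_normSq_apply A B hasFDerivAt_snd.snd hasFDerivAt_fst h
  have hℓ₂ (h : ℂ × ℂ × ℂ) : ℓ₂ h = 2 * (A * ⟪p.2.2, h.2.2⟫_ℝ + C * ⟪p.2.1, h.2.1⟫_ℝ) :=
    fderiv_mul_normSq_add_mul_normSq_apply A C hasFDerivAt_snd.snd hasFDerivAt_snd.fst h
  -- Euler's identity for quadratic forms: both differentials take the value `2 t` at `p`,
  -- so they are dependent only if they coincide.
  have euler₁ : ℓ₁ p = 2 * t := by
    rw [hℓ₁, ← hp₁]; simp only [real_inner_self_eq_norm_sq, normSq_eq_norm_sq]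
  have euler₂ : ℓ₂ p = 2 * t := by
    rw [hℓ₂, ← hp₂]; simp only [real_inner_self_eq_norm_sq, normSq_eq_norm_sq]
  rw [not_linearIndependent_pair_iff_eq (ContinuousLinearMap.apply ℝ ℝ p).toLinearMap
    (by simp [euler₁, euler₂]) (by simp [euler₁, ht.ne']), ContinuousLinearMap.ext_iff]
  simp only [hℓ₁, hℓ₂, Prod.forall, mul_right_inj' (two_ne_zero' ℝ), add_right_inj, forall_const,
    forall_mul_inner_eq_mul_inner_iff hB.ne' hC.ne']
  exact ⟨fun ⟨hw, hu⟩ => ⟨hw, hu, by simpa [hw] using hp₁⟩, fun ⟨hw, hu, _⟩ => ⟨hw, hu⟩⟩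

/-- Lemma 2.3(4): for `t > 0`, the fibre `F = J⁻¹(t,t)` of
`J(w,u,v) = (A|v|²+B|w|², A|v|²+C|u|²)` on `ℂ³ ≅ ℝ⁶` is singular exactly along
the circle `{(0,0,v) : A|v|² = t}`: a point of `F` is singular (the real
differentials of the two defining functions are linearly dependent there) iff
`w = 0`, `u = 0` and `A|v|² = t`. -/
theorem singular_locus_of_critical_fibre
    (A B C : ℝ) (hA : 0 < A) (hB : 0 < B) (hC : 0 < C) (t : ℝ) (ht : 0 < t) :
    ∀ p : ℂ × ℂ × ℂ,
      (A * Complex.normSq p.2.2 + B * Complex.normSq p.1 = t ∧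
       A * Complex.normSq p.2.2 + C * Complex.normSq p.2.1 = t) →
      (¬ LinearIndependent ℝ
          ![fderiv ℝ (fun q : ℂ × ℂ × ℂ =>
              A * Complex.normSq q.2.2 + B * Complex.normSq q.1) p,
            fderiv ℝ (fun q : ℂ × ℂ × ℂ =>
              A * Complex.normSq q.2.2 + C * Complex.normSq q.2.1) p] ↔
        (p.1 = 0 ∧ p.2.1 = 0 ∧ A * Complex.normSq p.2.2 = t)) :=
  singular_locus_of_critical_fibre_general A B C hB hC t ht
end

section
/- For the quadratic momentum map J_Z(v,w) = Σⱼ Γⱼ(|vⱼ|² + |wⱼ|²) restricted to the subspace {(v,w) ∈ ℂ³ × ℂ³ : Σⱼ Γⱼ vⱼ = 0 and Σⱼ Γⱼ wⱼ = 0}, the form J_Z is definite if and only if Γ₁Γ₂Γ₃(Γ₁+Γ₂+Γ₃) > 0; when definite, J_Z⁻¹(0) = {0}. -/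
/-!
On the plane `∑ Γⱼ vⱼ = 0` the last coordinate is determined by the first two, and eliminating it
turns `∑ Γⱼ |vⱼ|²` into a binary Hermitian form in `(v₀, v₁)` whose determinant is
`Γ₀Γ₁Γ₂(Γ₀ + Γ₁ + Γ₂) / Γ₂²`. Completing the square, `a Q(x, y) = |a x + b y|² + (a c - b²) |y|²`,
shows that a binary Hermitian form is definite exactly when its determinant is positive.
`J_Z(v, w)` is the sum of this form at `v` and at `w`, so it is definite exactly when the form is,
and a definite form vanishes only at `0`.
-/

open Complex Set ComplexConjugate

section Definiteness

variable {E F : Type*} [Zero E] [Zero F]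

def IsPosDefOn (Q : E → ℝ) (S : Set E) : Prop :=
  ∀ x ∈ S, x ≠ 0 → 0 < Q x

def IsDefiniteOn (Q : E → ℝ) (S : Set E) : Prop :=
  IsPosDefOn Q S ∨ IsPosDefOn (-Q) S

theorem IsDefiniteOn.mul_pos {Q : E → ℝ} {S : Set E} (hQ : IsDefiniteOn Q S)
    {x y : E} (hx : x ∈ S) (hx0 : x ≠ 0) (hy : y ∈ S) (hy0 : y ≠ 0) : 0 < Q x * Q y := by
  rcases hQ with hQ | hQ
  · exact _root_.mul_pos (hQ x hx hx0) (hQ y hy hy0)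
  · exact mul_pos_of_neg_of_neg (neg_pos.mp (hQ x hx hx0)) (neg_pos.mp (hQ y hy hy0))

theorem IsDefiniteOn.eq_zero_of_apply_eq_zero {Q : E → ℝ} {S : Set E} (hQ : IsDefiniteOn Q S)
    {x : E} (hx : x ∈ S) (hQx : Q x = 0) : x = 0 := by
  by_contra hx0
  simpa [hQx] using hQ.mul_pos hx hx0 hx hx0

theorem isDefiniteOn_of_mul_pos {Q : E → ℝ} {S : Set E} {a : ℝ} (ha : a ≠ 0)
    (h : ∀ x ∈ S, x ≠ 0 → 0 < a * Q x) : IsDefiniteOn Q S := by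
  rcases ha.lt_or_gt with ha | ha
  · exact Or.inr fun x hx hx0 => neg_pos.mpr (neg_of_mul_pos_right (h x hx hx0) ha.le)
  · exact Or.inl fun x hx hx0 => pos_of_mul_pos_right (h x hx hx0) ha.le

theorem isPosDefOn_iff_of_surjOn {Q : E → ℝ} {Q' : F → ℝ} {S : Set E} {f : E → F}
    (hf : SurjOn f S univ) (hf0 : ∀ x ∈ S, f x = 0 ↔ x = 0) (hQ : ∀ x ∈ S, Q x = Q' (f x)) :
    IsPosDefOn Q S ↔ IsPosDefOn Q' univ := by
  constructor
  · intro h y _ hy0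
    obtain ⟨x, hx, rfl⟩ := hf (mem_univ y)
    rw [← hQ x hx]
    exact h x hx fun hx0 => hy0 ((hf0 x hx).mpr hx0)
  · intro h x hx hx0
    rw [hQ x hx]
    exact h (f x) (mem_univ _) fun h0 => hx0 ((hf0 x hx).mp h0)

theorem isDefiniteOn_iff_of_surjOn {Q : E → ℝ} {Q' : F → ℝ} {S : Set E} {f : E → F}
    (hf : SurjOn f S univ) (hf0 : ∀ x ∈ S, f x = 0 ↔ x = 0) (hQ : ∀ x ∈ S, Q x = Q' (f x)) :
    IsDefiniteOn Q S ↔ IsDefiniteOn Q' univ :=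
  or_congr (isPosDefOn_iff_of_surjOn hf hf0 hQ)
    (isPosDefOn_iff_of_surjOn hf hf0 fun x hx => congrArg Neg.neg (hQ x hx))

theorem isPosDefOn_sum_prod_iff {Q : E → ℝ} {S : Set E} (h0 : (0 : E) ∈ S) (hQ0 : Q 0 = 0) :
    IsPosDefOn (fun p : E × E => Q p.1 + Q p.2) (S ×ˢ S) ↔ IsPosDefOn Q S := by
  constructor
  · intro h x hx hx0
    simpa [hQ0] using h (x, 0) ⟨hx, h0⟩ (by simp [hx0])
  · rintro h ⟨x, y⟩ ⟨hx, hy⟩ hxy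
    have nonneg : ∀ z ∈ S, 0 ≤ Q z := fun z hz => by
      rcases eq_or_ne z 0 with rfl | hz0
      exacts [hQ0.ge, (h z hz hz0).le]
    rcases eq_or_ne x 0 with rfl | hx0
    · exact add_pos_of_nonneg_of_pos (nonneg 0 h0) (h y hy fun hy0 => hxy (by simp [hy0]))
    · exact add_pos_of_pos_of_nonneg (h x hx hx0) (nonneg y hy)

theorem isDefiniteOn_sum_prod_iff {Q : E → ℝ} {S : Set E} (h0 : (0 : E) ∈ S) (hQ0 : Q 0 = 0) :
    IsDefiniteOn (fun p : E × E => Q p.1 + Q p.2) (S ×ˢ S) ↔ IsDefiniteOn Q S := by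
  refine or_congr (isPosDefOn_sum_prod_iff h0 hQ0) ?_
  convert isPosDefOn_sum_prod_iff (Q := -Q) h0 (by simp [hQ0]) using 2
  ext p
  simp only [Pi.neg_apply, neg_add]

end Definiteness

section HermitianForm

def binaryHermForm (a b c : ℝ) (p : ℂ × ℂ) : ℝ :=
  a * normSq p.1 + 2 * b * (p.1 * conj p.2).re + c * normSq p.2

theorem mul_binaryHermForm (a b c : ℝ) (p : ℂ × ℂ) :
    a * binaryHermForm a b c p = normSq (a * p.1 + b * p.2) + (a * c - b ^ 2) * normSq p.2 := by
  simp only [binaryHermForm, normSq_add, normSq_ofReal, map_mul, conj_ofReal]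
  simp only [mul_re, ofReal_re, ofReal_im, mul_im]
  ring

/-- `(-b, a)` kills the square in `mul_binaryHermForm`. -/
theorem binaryHermForm_mul_binaryHermForm (a b c : ℝ) :
    binaryHermForm a b c (1, 0) * binaryHermForm a b c (-b, a) = a ^ 2 * (a * c - b ^ 2) := by
  simp only [binaryHermForm, map_one, mul_one, map_zero, mul_zero, zero_re, add_zero, normSq_neg,
    normSq_ofReal, conj_ofReal, neg_mul, neg_re, mul_re, ofReal_re, ofReal_im, sub_zero, mul_neg]
  ring

theorem isDefiniteOn_binaryHermForm_iff (a b c : ℝ) :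
    IsDefiniteOn (binaryHermForm a b c) univ ↔ 0 < a * c - b ^ 2 := by
  constructor
  · intro h
    have ha : 0 < a * a := by
      simpa [binaryHermForm] using
        h.mul_pos (x := (1, 0)) (y := (1, 0)) (mem_univ _) (by simp) (mem_univ _) (by simp)
    have ha0 : a ≠ 0 := by rintro rfl; simp at ha
    have hprod := h.mul_pos (x := (1, 0)) (y := (-b, a)) (mem_univ _) (by simp)
      (mem_univ _) (by simp [ha0])
    rw [binaryHermForm_mul_binaryHermForm] at hprod
    exact pos_of_mul_pos_right hprod (sq_nonneg a)
  · intro hD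
    have ha : a ≠ 0 := by rintro rfl; nlinarith [sq_nonneg b]
    refine isDefiniteOn_of_mul_pos ha fun p _ hp => ?_
    rw [mul_binaryHermForm]
    rcases eq_or_ne p.2 0 with h2 | h2
    · have h1 : p.1 ≠ 0 := fun h1 => hp (Prod.ext h1 h2)
      rw [h2, mul_zero, add_zero, normSq_zero, mul_zero, add_zero]
      exact normSq_pos.mpr (mul_ne_zero (ofReal_ne_zero.mpr ha) h1)
    · exact add_pos_of_nonneg_of_pos (normSq_nonneg _) (mul_pos hD (normSq_pos.mpr h2))

end HermitianForm

section WeightedPlane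

variable (Γ : Fin 3 → ℝ)

def weightedNormSq (v : Fin 3 → ℂ) : ℝ :=
  ∑ j, Γ j * normSq (v j)

def weightedPlane : Set (Fin 3 → ℂ) :=
  {v | ∑ j, (Γ j : ℂ) * v j = 0}

theorem weightedNormSq_zero : weightedNormSq Γ 0 = 0 := by
  simp [weightedNormSq]

theorem zero_mem_weightedPlane : (0 : Fin 3 → ℂ) ∈ weightedPlane Γ := by
  simp [weightedPlane]

variable {Γ}

theorem mem_weightedPlane_iff {v : Fin 3 → ℂ} :
    v ∈ weightedPlane Γ ↔ (Γ 2 : ℂ) * v 2 = -(Γ 0 * v 0 + Γ 1 * v 1) := by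
  rw [weightedPlane, mem_ofPred_eq, Fin.sum_univ_three, eq_neg_iff_add_eq_zero]
  ring_nf

theorem surjOn_weightedPlane (hΓ2 : Γ 2 ≠ 0) :
    SurjOn (fun v : Fin 3 → ℂ => (v 0, v 1)) (weightedPlane Γ) univ := by
  rintro ⟨x, y⟩ -
  refine ⟨![x, y, -(Γ 0 * x + Γ 1 * y) / Γ 2], ?_, rfl⟩
  rw [mem_weightedPlane_iff]
  simp [mul_div_cancel₀ _ (ofReal_ne_zero.mpr hΓ2)]

theorem prodMk_eq_zero_iff_of_mem_weightedPlane (hΓ2 : Γ 2 ≠ 0) {v : Fin 3 → ℂ}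
    (hv : v ∈ weightedPlane Γ) : (v 0, v 1) = 0 ↔ v = 0 := by
  refine ⟨fun h01 => ?_, fun h => by simp [h]⟩
  obtain ⟨h0, h1⟩ := Prod.mk_eq_zero.mp h01
  rw [mem_weightedPlane_iff, h0, h1] at hv
  have h2 : v 2 = 0 := by simpa [hΓ2] using hv
  ext j
  fin_cases j <;> assumption

theorem weightedNormSq_eq_binaryHermForm (hΓ2 : Γ 2 ≠ 0) {v : Fin 3 → ℂ}
    (hv : v ∈ weightedPlane Γ) :
    weightedNormSq Γ v = binaryHermForm (Γ 0 * (Γ 0 + Γ 2) / Γ 2) (Γ 0 * Γ 1 / Γ 2)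
      (Γ 1 * (Γ 1 + Γ 2) / Γ 2) (v 0, v 1) := by
  have h2 := congrArg normSq (mem_weightedPlane_iff.mp hv)
  simp only [normSq_neg, normSq_add, normSq_mul, normSq_ofReal, mul_re, mul_im, conj_re,
    conj_im, ofReal_re, ofReal_im] at h2
  simp only [weightedNormSq, Fin.sum_univ_three, binaryHermForm, mul_re, conj_re, conj_im]
  field_simp
  linear_combination h2

end WeightedPlane

/-- Remark 2.6: the quadratic momentum map `J_Z(v,w) = Σⱼ Γⱼ(|vⱼ|² + |wⱼ|²)`
restricted to the subspace `{(v,w) : Σⱼ Γⱼvⱼ = 0, Σⱼ Γⱼwⱼ = 0}` of `ℂ³ × ℂ³`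
is (positive or negative) definite iff `Γ₁Γ₂Γ₃(Γ₁+Γ₂+Γ₃) > 0`; and when this
holds, `J_Z⁻¹(0) = {0}` on that subspace. -/
theorem JZ_definite_iff (Γ : Fin 3 → ℝ) (hΓ : ∀ j, Γ j ≠ 0) :
    (((∀ v w : Fin 3 → ℂ, (∑ j, (Γ j : ℂ) * v j) = 0 → (∑ j, (Γ j : ℂ) * w j) = 0 →
        (v, w) ≠ 0 →
        0 < ∑ j, Γ j * (Complex.normSq (v j) + Complex.normSq (w j))) ∨
      (∀ v w : Fin 3 → ℂ, (∑ j, (Γ j : ℂ) * v j) = 0 → (∑ j, (Γ j : ℂ) * w j) = 0 →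
        (v, w) ≠ 0 →
        (∑ j, Γ j * (Complex.normSq (v j) + Complex.normSq (w j))) < 0)) ↔
      0 < Γ 0 * Γ 1 * Γ 2 * (Γ 0 + Γ 1 + Γ 2)) ∧
    (0 < Γ 0 * Γ 1 * Γ 2 * (Γ 0 + Γ 1 + Γ 2) →
      ∀ v w : Fin 3 → ℂ, (∑ j, (Γ j : ℂ) * v j) = 0 → (∑ j, (Γ j : ℂ) * w j) = 0 →
        (∑ j, Γ j * (Complex.normSq (v j) + Complex.normSq (w j))) = 0 →
        v = 0 ∧ w = 0) := by
  have hΓ2 := hΓ 2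
  have hsplit (v w : Fin 3 → ℂ) : ∑ j, Γ j * (normSq (v j) + normSq (w j)) =
      weightedNormSq Γ v + weightedNormSq Γ w := by
    simp only [weightedNormSq, mul_add, Finset.sum_add_distrib]
  have hdisc : Γ 0 * (Γ 0 + Γ 2) / Γ 2 * (Γ 1 * (Γ 1 + Γ 2) / Γ 2) - (Γ 0 * Γ 1 / Γ 2) ^ 2 =
      Γ 0 * Γ 1 * Γ 2 * (Γ 0 + Γ 1 + Γ 2) / Γ 2 ^ 2 := by
    field_simp
    ring
  have key : IsDefiniteOn (fun p => weightedNormSq Γ p.1 + weightedNormSq Γ p.2)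
      (weightedPlane Γ ×ˢ weightedPlane Γ) ↔ 0 < Γ 0 * Γ 1 * Γ 2 * (Γ 0 + Γ 1 + Γ 2) := by
    rw [isDefiniteOn_sum_prod_iff (zero_mem_weightedPlane Γ) (weightedNormSq_zero Γ),
      isDefiniteOn_iff_of_surjOn (surjOn_weightedPlane hΓ2)
        (fun _ hv => prodMk_eq_zero_iff_of_mem_weightedPlane hΓ2 hv)
        (fun _ hv => weightedNormSq_eq_binaryHermForm hΓ2 hv),
      isDefiniteOn_binaryHermForm_iff, hdisc, div_pos_iff_of_pos_right (by positivity)]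
  refine ⟨?_, fun hδ v w hv hw hJ => ?_⟩
  · simpa only [IsDefiniteOn, IsPosDefOn, Prod.forall, mem_prod, weightedPlane, mem_ofPred_eq,
      Pi.neg_apply, neg_pos, hsplit, and_imp] using key
  · rw [hsplit] at hJ
    exact Prod.mk_eq_zero.mp ((key.mpr hδ).eq_zero_of_apply_eq_zero ⟨hv, hw⟩ hJ)
end
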